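/- Let d ≥ 2 and let G=(V,E) be a connected, acyclic, d-regular simple graph (the infinite d-regular tree). Let v₁,v₂,… be a bijective enumeration of V such that for every N ≥ 1 the set {v₁,…,v_N} induces a connected subgraph and every vertex adjacent to {v₁,…,v_N} lies in {v₁,…,v_{(d−1)N+2}} (these properties hold for the canonical breadth-first ordering starting at a root). Then for every finitely supported f : V → ℝ_{≥0}, every real p with 1 ≤ p < ∞, and also p = ∞, the associated rearrangement satisfies ‖∇f*‖_{L^p} ≤ ‖∇f‖_{L^p}. -/

import Mathlib

open Real

/-- The edge boundary of a set `A`: the edges of `G` with exactly one endpoint in `A`. -/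
def edgeBoundary {V : Type*} (G : SimpleGraph V) (A : Set V) : Set (Sym2 V) :=
  {e | e ∈ G.edgeSet ∧ ∃ u w : V, e = s(u, w) ∧ u ∈ A ∧ w ∉ A}

/-- The vertex boundary of `A`: vertices outside `A` adjacent to some vertex of `A`. -/
def vertexBoundary {V : Type*} (G : SimpleGraph V) (A : Set V) : Set V :=
  {u | u ∉ A ∧ ∃ w ∈ A, G.Adj u w}

/-- The vertex-isoperimetric profile `∂_V(N)`. -/
noncomputable def vertexProfile {V : Type*} (G : SimpleGraph V) (N : ℕ) : ℕ :=
  sInf {k : ℕ | ∃ A : Set V, A.Finite ∧ A.ncard = N ∧ (vertexBoundary G A).ncard = k}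

/-- `‖∇f‖_{L¹} = ∑_{{u,w} ∈ E} |f u - f w|`. -/
noncomputable def gradL1 {V : Type*} (G : SimpleGraph V) (f : V → ℝ) : ℝ :=
  ∑' e : G.edgeSet,
    Sym2.lift ⟨fun u w => |f u - f w|, fun u w => by dsimp only; rw [abs_sub_comm]⟩ e.1

/-- `‖∇f‖_{L^∞} = sup_{{u,w} ∈ E} |f u - f w|`. -/
noncomputable def gradLinf {V : Type*} (G : SimpleGraph V) (f : V → ℝ) : ℝ :=
  ⨆ e : G.edgeSet,
    Sym2.lift ⟨fun u w => |f u - f w|, fun u w => by dsimp only; rw [abs_sub_comm]⟩ e.1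

/-- `‖∇f‖_{L^p} = (∑_{{u,w} ∈ E} |f u - f w|^p)^(1/p)` for real `p`. -/
noncomputable def gradLp {V : Type*} (G : SimpleGraph V) (f : V → ℝ) (p : ℝ) : ℝ :=
  (∑' e : G.edgeSet,
    Sym2.lift ⟨fun u w => |f u - f w| ^ p,
      fun u w => by dsimp only; rw [abs_sub_comm]⟩ e.1) ^ (1 / p)

/-- `‖∇f‖_{L²} = (∑_{{u,w} ∈ E} |f u - f w|²)^(1/2)`. -/
noncomputable def gradL2 {V : Type*} (G : SimpleGraph V) (f : V → ℝ) : ℝ :=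
  Real.sqrt (∑' e : G.edgeSet,
    Sym2.lift ⟨fun u w => |f u - f w| ^ 2,
      fun u w => by dsimp only; rw [abs_sub_comm]⟩ e.1)

/-- `g` is the rearrangement of `f` along the enumeration `v` (with `v 0 = v₁`):
`g` is obtained from `f` by permuting its values, and the values of `g` are
non-increasing along the enumeration. -/
def IsRearrangement {V : Type*} (v : ℕ → V) (f g : V → ℝ) : Prop :=
  (∃ σ : Equiv.Perm V, g = f ∘ σ) ∧ ∀ m n : ℕ, m ≤ n → g (v n) ≤ g (v m)

/-- The grid graph `(ℤ², ℓ¹)`. -/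
def gridGraph : SimpleGraph (ℤ × ℤ) where
  Adj p q := |p.1 - q.1| + |p.2 - q.2| = 1
  symm := by
    constructor
    intro p q h
    show |q.1 - p.1| + |q.2 - p.2| = 1
    rw [abs_sub_comm q.1 p.1, abs_sub_comm q.2 p.2]
    exact h
  loopless := by constructor; intro p h; simp at h

/-- One step of the counterclockwise square spiral on `ℤ²`. -/
def spiralNext : ℤ × ℤ → ℤ × ℤ := fun p =>
  if 1 ≤ p.1 ∧ p.2 = -p.1 then (p.1 + 1, p.2)
  else if 1 ≤ p.1 ∧ -p.1 ≤ p.2 ∧ p.2 < p.1 then (p.1, p.2 + 1)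
  else if 1 ≤ p.2 ∧ -p.2 < p.1 ∧ p.1 ≤ p.2 then (p.1 - 1, p.2)
  else if p.1 ≤ -1 ∧ p.1 < p.2 ∧ p.2 ≤ -p.1 then (p.1, p.2 - 1)
  else (p.1 + 1, p.2)

/-- The spiral enumeration of `ℤ²`, 0-indexed: `spiral 0 = v₁ = (0,0)`,
`spiral 1 = v₂ = (1,0)`, `spiral 2 = v₃ = (1,1)`, `spiral 3 = v₄ = (0,1)`, … -/
def spiral (n : ℕ) : ℤ × ℤ := spiralNext^[n] (0, 0)

/-!
Every vertex `v n` with `n ≥ 1` has exactly one earlier neighbour `v (P n)`, since the initial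
segments are connected and `G` is acyclic; so the edges of `G` are the pairs `{v (P n), v n}`, and
regularity together with the neighbourhood condition forces `P` to be the breadth-first parent map.

By the layer-cake formula, `∑ₑ (|∇g| e - t)₊` is the integral over `s` of the number of edges along
which `g` drops from above `s + t` to at most `s`. Let `M = #{g > s + t}` and `N = #{g > s}`. If `g`
is non-increasing along the enumeration, these are the edges `{v (P n), v n}` with
`N ≤ n ≤ (d - 1) M + 1`, so there are `(d - 1) M + 2 - N` of them. For any other `g` there are at
least `d M - (M - 1) - (N - 1)`, because in a tree a set of `k` vertices spans at most `k - 1`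
edges. So the gradient of `f*` is weakly majorized by that of `f`. This gives the `Lᵖ` inequality
for `p > 1` through `x ^ p = p (p - 1) ∫₀^∞ t ^ (p - 2) (x - t)₊ dt`, for `p = 1` at `t = 0`, and
for `p = ∞` at `t = ‖∇f‖_∞`.
-/

open Finset MeasureTheory

section Majorization

variable {ι : Type*}

theorem sum_max_sub_le_of_forall_card_le (s : Finset ι) {c e c' e' : ι → ℝ}
    (H : ∀ r, #{i ∈ s | e i ≤ r ∧ r < c i} ≤ #{i ∈ s | e' i ≤ r ∧ r < c' i}) :
    ∑ i ∈ s, max (c i - e i) 0 ≤ ∑ i ∈ s, max (c' i - e' i) 0 := by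
  have hint (c e : ι → ℝ) (i : ι) : Integrable ((Set.Ico (e i) (c i)).indicator (1 : ℝ → ℝ)) :=
    (integrable_indicator_iff measurableSet_Ico).2 (integrableOn_const measure_Ico_lt_top.ne)
  have hlayer (c e : ι → ℝ) : ∑ i ∈ s, max (c i - e i) 0
      = ∫ r, ∑ i ∈ s, (Set.Ico (e i) (c i)).indicator 1 r := by
    rw [integral_finsetSum _ fun i _ => hint c e i]
    simp only [integral_indicator_one measurableSet_Ico, Real.volume_real_Ico]
  have hcount (c e : ι → ℝ) (r : ℝ) : ∑ i ∈ s, (Set.Ico (e i) (c i)).indicator 1 r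
      = (#{i ∈ s | e i ≤ r ∧ r < c i} : ℝ) := by
    rw [card_filter]
    push_cast
    simp [Set.indicator_apply]
  rw [hlayer, hlayer]
  refine integral_mono (integrable_finsetSum _ fun i _ => hint c e i)
    (integrable_finsetSum _ fun i _ => hint c' e' i) fun r => ?_
  simp only [hcount]
  exact_mod_cast H r

theorem integral_rpow_mul_max_sub {p : ℝ} (hp : 1 < p) {u T : ℝ} (hu : 0 ≤ u) (huT : u ≤ T) :
    ∫ t in (0 : ℝ)..T, t ^ (p - 2) * max (u - t) 0 = u ^ p / (p * (p - 1)) := by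
  have hp2 : (-1 : ℝ) < p - 2 := by linarith
  have hp1 : (-1 : ℝ) < p - 1 := by linarith
  have hint (a b : ℝ) : IntervalIntegrable (fun t => t ^ (p - 2) * max (u - t) 0) volume a b :=
    (intervalIntegral.intervalIntegrable_rpow' hp2).mul_continuousOn (by fun_prop)
  have htail : ∫ t in u..T, t ^ (p - 2) * max (u - t) 0 = 0 := by
    refine intervalIntegral.integral_congr (g := fun _ => 0) (fun t ht => ?_) |>.trans (by simp)
    rw [Set.uIcc_of_le huT] at ht
    simp [max_eq_right (sub_nonpos.2 ht.1)]
  have hhead : ∫ t in (0 : ℝ)..u, t ^ (p - 2) * max (u - t) 0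
      = ∫ t in (0 : ℝ)..u, (u * t ^ (p - 2) - t ^ (p - 1)) := by
    refine intervalIntegral.integral_congr fun t ht => ?_
    rw [Set.uIcc_of_le hu] at ht
    rcases ht.1.eq_or_lt with rfl | ht0
    · simp [Real.zero_rpow (by linarith : p - 1 ≠ 0), max_eq_left hu, mul_comm]
    · rw [max_eq_left (sub_nonneg.2 ht.2), show p - 1 = p - 2 + 1 by ring,
        Real.rpow_add_one ht0.ne']
      ring
  rw [← intervalIntegral.integral_add_adjacent_intervals (hint 0 u) (hint u T), htail, add_zero,
    hhead, intervalIntegral.integral_sub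
      ((intervalIntegral.intervalIntegrable_rpow' hp2).const_mul u)
      (intervalIntegral.intervalIntegrable_rpow' hp1), intervalIntegral.integral_const_mul,
    integral_rpow (Or.inl hp2), integral_rpow (Or.inl hp1), show p - 2 + 1 = p - 1 by ring,
    show p - 1 + 1 = p by ring, Real.zero_rpow (by linarith), Real.zero_rpow (by linarith),
    sub_zero, sub_zero, ← mul_div_assoc, ← Real.rpow_one_add' hu (by linarith),
    show 1 + (p - 1) = p by ring]
  have : p - 1 ≠ 0 := by linarith
  field_simp
  ring

theorem le_of_sum_max_sub_le {s : Finset ι} {x y : ι → ℝ} {T : ℝ}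
    (hyT : ∀ i ∈ s, y i ≤ T) (H : ∑ i ∈ s, max (x i - T) 0 ≤ ∑ i ∈ s, max (y i - T) 0) :
    ∀ i ∈ s, x i ≤ T := by
  have hy0 : ∑ i ∈ s, max (y i - T) 0 = 0 :=
    sum_eq_zero fun i hi => max_eq_right (sub_nonpos.2 (hyT i hi))
  have hx0 := (sum_eq_zero_iff_of_nonneg fun i _ => le_max_right (x i - T) 0).1
    (le_antisymm (hy0 ▸ H) (sum_nonneg fun i _ => le_max_right _ _))
  exact fun i hi => sub_nonpos.1 (max_eq_right_iff.1 (hx0 i hi))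

theorem sum_rpow_le_sum_rpow_of_forall_sum_max_sub_le {s : Finset ι} {x y : ι → ℝ}
    (hx : ∀ i ∈ s, 0 ≤ x i) (hy : ∀ i ∈ s, 0 ≤ y i)
    (H : ∀ t, 0 ≤ t → ∑ i ∈ s, max (x i - t) 0 ≤ ∑ i ∈ s, max (y i - t) 0)
    {p : ℝ} (hp : 1 ≤ p) : ∑ i ∈ s, x i ^ p ≤ ∑ i ∈ s, y i ^ p := by
  rcases hp.eq_or_lt with rfl | hp
  · simp only [Real.rpow_one]
    calc ∑ i ∈ s, x i = ∑ i ∈ s, max (x i - 0) 0 := sum_congr rfl fun i hi => by simp [hx i hi]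
      _ ≤ ∑ i ∈ s, max (y i - 0) 0 := H 0 le_rfl
      _ = ∑ i ∈ s, y i := sum_congr rfl fun i hi => by simp [hy i hi]
  set T := ∑ i ∈ s, y i
  have hT : 0 ≤ T := sum_nonneg hy
  have hyT : ∀ i ∈ s, y i ≤ T := fun i hi => single_le_sum hy hi
  have hxT := le_of_sum_max_sub_le hyT (H T hT)
  have hint (z : ι → ℝ) (i : ι) :
      IntervalIntegrable (fun t => t ^ (p - 2) * max (z i - t) 0) volume 0 T :=
    (intervalIntegral.intervalIntegrable_rpow' (by linarith)).mul_continuousOn (by fun_prop)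
  have hrepr (z : ι → ℝ) (hz : ∀ i ∈ s, 0 ≤ z i) (hzT : ∀ i ∈ s, z i ≤ T) :
      ∑ i ∈ s, z i ^ p
        = p * (p - 1) * ∫ t in (0 : ℝ)..T, t ^ (p - 2) * ∑ i ∈ s, max (z i - t) 0 := by
    simp_rw [mul_sum]
    rw [intervalIntegral.integral_finsetSum fun i _ => hint z i, mul_sum]
    refine sum_congr rfl fun i hi => ?_
    rw [integral_rpow_mul_max_sub hp (hz i hi) (hzT i hi)]
    field_simp [show p - 1 ≠ 0 by linarith]
  rw [hrepr x hx hxT, hrepr y hy hyT]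
  refine mul_le_mul_of_nonneg_left (intervalIntegral.integral_mono_on hT ?_ ?_ fun t ht => ?_)
    (by nlinarith)
  · simpa only [mul_sum, sum_fn] using IntervalIntegrable.sum s fun i _ => hint x i
  · simpa only [mul_sum, sum_fn] using IntervalIntegrable.sum s fun i _ => hint y i
  · exact mul_le_mul_of_nonneg_left (H t ht.1) (Real.rpow_nonneg ht.1 _)

theorem tsum_rpow_le_tsum_rpow_of_forall_sum_max_sub_le {s : Finset ι} {x y : ι → ℝ}
    (hx : ∀ i, 0 ≤ x i) (hy : ∀ i, 0 ≤ y i) (hxs : ∀ i ∉ s, x i = 0) (hys : ∀ i ∉ s, y i = 0)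
    (H : ∀ t, 0 ≤ t → ∑ i ∈ s, max (x i - t) 0 ≤ ∑ i ∈ s, max (y i - t) 0)
    {p : ℝ} (hp : 1 ≤ p) : ∑' i, x i ^ p ≤ ∑' i, y i ^ p := by
  have hp0 : p ≠ 0 := by linarith
  rw [tsum_eq_sum fun i hi => by rw [hxs i hi, Real.zero_rpow hp0],
    tsum_eq_sum fun i hi => by rw [hys i hi, Real.zero_rpow hp0]]
  exact sum_rpow_le_sum_rpow_of_forall_sum_max_sub_le (fun i _ => hx i) (fun i _ => hy i) H hp

theorem iSup_le_iSup_of_forall_sum_max_sub_le {s : Finset ι} {x y : ι → ℝ}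
    (hy : ∀ i, 0 ≤ y i) (hxs : ∀ i ∉ s, x i = 0) (hys : ∀ i ∉ s, y i = 0)
    (H : ∀ t, 0 ≤ t → ∑ i ∈ s, max (x i - t) 0 ≤ ∑ i ∈ s, max (y i - t) 0) :
    ⨆ i, x i ≤ ⨆ i, y i := by
  have hbdd : BddAbove (Set.range y) := by
    refine ⟨∑ i ∈ s, y i, Set.forall_mem_range.2 fun i => ?_⟩
    by_cases hi : i ∈ s
    · exact single_le_sum (fun j _ => hy j) hi
    · exact hys i hi ▸ sum_nonneg fun j _ => hy j
  have hT : 0 ≤ ⨆ i, y i := Real.iSup_nonneg hy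
  refine Real.iSup_le (fun i => ?_) hT
  by_cases hi : i ∈ s
  · exact le_of_sum_max_sub_le (fun j _ => le_ciSup hbdd j) (H _ hT) i hi
  · exact hxs i hi ▸ hT

end Majorization

theorem Antitone.lt_iff_lt_card_filter {β : Type*} [LinearOrder β] {a : ℕ → β} (ha : Antitone a)
    {K : ℕ} {r : β} (hK : ∀ n, K ≤ n → a n ≤ r) (n : ℕ) :
    r < a n ↔ n < #{k ∈ range K | r < a k} := by
  have hlt : ∀ k, r < a k → k < K := fun k h => not_le.1 fun hk => (hK k hk).not_gt h
  constructor
  · intro h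
    have : range (n + 1) ⊆ {k ∈ range K | r < a k} := fun k hk => by
      have := h.trans_le (ha (Nat.lt_succ_iff.1 (mem_range.1 hk)))
      exact mem_filter.2 ⟨mem_range.2 (hlt k this), this⟩
    simpa using card_le_card this
  · intro h
    by_contra! hn
    have : {k ∈ range K | r < a k} ⊆ range n := fun k hk =>
      mem_range.2 (not_le.1 fun hkn => (mem_filter.1 hk).2.not_ge ((ha hkn).trans hn))
    exact (card_le_card this).not_gt (by simpa using h)

theorem card_filter_lt_apply_perm {α : Type*} {S : Finset α} {b : α → ℝ} (τ : Equiv.Perm α)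
    (hb : ∀ x ∉ S, b x = 0) (hbτ : ∀ x ∉ S, b (τ x) = 0) {r : ℝ} (hr : 0 ≤ r) :
    #{x ∈ S | r < b (τ x)} = #{x ∈ S | r < b x} := by
  have hmem : ∀ x, r < b x → x ∈ S := fun x h => by
    by_contra hx
    exact (hb x hx ▸ h).not_ge hr
  have hmemτ : ∀ x, r < b (τ x) → x ∈ S := fun x h => by
    by_contra hx
    exact (hbτ x hx ▸ h).not_ge hr
  refine card_nbij' τ τ.symm (fun x hx => ?_) (fun x hx => ?_) (fun x _ => by simp)
    (fun x _ => by simp)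
  · have := (mem_filter.1 hx).2
    exact mem_filter.2 ⟨hmem _ this, this⟩
  · have : r < b (τ (τ.symm x)) := by simpa using (mem_filter.1 hx).2
    exact mem_filter.2 ⟨hmemτ _ this, this⟩

theorem card_filter_mem_and_mem_le {P : ℕ → ℕ} {s : Finset ℕ} (hP : ∀ n ∈ s, P n < n)
    (S : Finset ℕ) : #{n ∈ s | n ∈ S ∧ P n ∈ S} ≤ #S - 1 := by
  rcases S.eq_empty_or_nonempty with rfl | hS
  · simp
  calc #{n ∈ s | n ∈ S ∧ P n ∈ S} ≤ #(S.erase (S.min' hS)) := by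
        refine card_le_card fun n hn => ?_
        simp only [mem_filter] at hn
        exact mem_erase.2 ⟨fun h => (S.min'_le _ hn.2.2).not_gt (h ▸ hP n hn.1), hn.2.1⟩
    _ = #S - 1 := card_erase_of_mem (S.min'_mem hS)

theorem filter_mem_Ico_one_eq_erase {B : Finset ℕ} {R : ℕ} (hB : B ⊆ range R) :
    {n ∈ Ico 1 R | n ∈ B} = B.erase 0 := by
  ext n
  have hnR : n ∈ B → n < R := fun h => mem_range.1 (hB h)
  simp only [mem_filter, mem_Ico, mem_erase]
  constructor
  · rintro ⟨⟨h1, -⟩, hn⟩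
    exact ⟨by omega, hn⟩
  · rintro ⟨h0, hn⟩
    exact ⟨⟨by omega, hnR hn⟩, hn⟩

/-- `P` is the parent map of the breadth-first numbering of the `d`-regular tree rooted at `0`:
the children of `0, …, M - 1` are exactly `1, …, (d - 1) M + 1`. -/
def IsBFSParent (d : ℕ) (P : ℕ → ℕ) : Prop :=
  ∀ M n, 1 ≤ M → 1 ≤ n → (P n < M ↔ n ≤ (d - 1) * M + 1)

theorem isBFSParent_of_card_children {d : ℕ} {P : ℕ → ℕ}
    (hup : ∀ M n, 1 ≤ M → 1 ≤ n → P n < M → n ≤ (d - 1) * M + 1)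
    (hchild : ∀ m, #{n ∈ Icc 1 ((d - 1) * (m + 1) + 1) | P n = m}
      = d - 1 + if m = 0 then 1 else 0) :
    IsBFSParent d P := by
  intro M n hM hn
  refine ⟨hup M n hM hn, fun hnM => ?_⟩
  -- The `(d - 1) M + 1` children of `0, …, M - 1` lie in `[1, (d - 1) M + 1]`, so they fill it.
  have hfill : {k ∈ Icc 1 ((d - 1) * M + 1) | P k < M} = Icc 1 ((d - 1) * M + 1) := by
    refine eq_of_subset_of_card_le (filter_subset _ _) ?_
    have hfiber : ∀ m ∈ range M, #{k ∈ {k ∈ Icc 1 ((d - 1) * M + 1) | P k < M} | P k = m}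
        = d - 1 + if m = 0 then 1 else 0 := by
      intro m hm
      have hmM : (d - 1) * (m + 1) ≤ (d - 1) * M := Nat.mul_le_mul_left _ (mem_range.1 hm)
      rw [← hchild m, filter_filter]
      congr 1
      ext k
      simp only [mem_filter, mem_Icc]
      constructor
      · rintro ⟨⟨hk, -⟩, -, hPk⟩
        exact ⟨⟨hk, hup (m + 1) k (by omega) hk (by omega)⟩, hPk⟩
      · rintro ⟨⟨hk, hkm⟩, hPk⟩
        exact ⟨⟨hk, by omega⟩, hPk ▸ mem_range.1 hm, hPk⟩
    rw [card_eq_sum_card_fiberwise (t := range M) fun k hk => mem_range.2 (mem_filter.1 hk).2,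
      sum_congr rfl hfiber, sum_add_distrib, sum_const, card_range, smul_eq_mul, sum_ite_eq',
      if_pos (mem_range.2 hM), Nat.card_Icc, mul_comm M]
    omega
  have : n ∈ {k ∈ Icc 1 ((d - 1) * M + 1) | P k < M} := by
    rw [hfill]
    exact mem_Icc.2 ⟨hn, hnM⟩
  exact (mem_filter.1 this).2

namespace IsBFSParent

variable {d : ℕ} {P : ℕ → ℕ}

theorem lt_self (hP : IsBFSParent d P) (hd : 2 ≤ d) {n : ℕ} (hn : 1 ≤ n) : P n < n :=
  (hP n n hn hn).2 (by nlinarith [Nat.sub_add_cancel (by omega : 1 ≤ d)])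

theorem filter_lt_eq (hP : IsBFSParent d P) {M R : ℕ} (hM : 1 ≤ M) (hR : (d - 1) * M + 2 ≤ R) :
    {n ∈ Ico 1 R | P n < M} = Icc 1 ((d - 1) * M + 1) := by
  ext n
  simp only [mem_filter, mem_Ico, mem_Icc]
  constructor
  · rintro ⟨⟨hn, -⟩, h⟩
    exact ⟨hn, (hP M n hM hn).1 h⟩
  · rintro ⟨hn, h⟩
    exact ⟨⟨hn, by omega⟩, (hP M n hM hn).2 h⟩

theorem card_filter_parent_eq (hP : IsBFSParent d P) {m R : ℕ} (hR : (d - 1) * (m + 1) + 2 ≤ R) :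
    #{n ∈ Ico 1 R | P n = m} = d - 1 + if m = 0 then 1 else 0 := by
  have hsplit : #{n ∈ Ico 1 R | P n < m + 1}
      = #{n ∈ Ico 1 R | P n < m} + #{n ∈ Ico 1 R | P n = m} := by
    rw [← card_union_of_disjoint (disjoint_filter.2 fun n _ h => h.ne), ← filter_or]
    congr 1
    exact filter_congr fun n _ => by omega
  rw [hP.filter_lt_eq (by omega) hR, Nat.card_Icc] at hsplit
  split_ifs with hm
  · subst hm
    rw [filter_false_of_mem fun n _ => Nat.not_lt_zero (P n), card_empty] at hsplit
    omega
  · rw [hP.filter_lt_eq (by omega) (by nlinarith), Nat.card_Icc] at hsplit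
    have : (d - 1) * (m + 1) = (d - 1) * m + (d - 1) := by ring
    omega

theorem card_filter_parent_mem (hP : IsBFSParent d P) {B : Finset ℕ} {K R : ℕ}
    (hB : B ⊆ range K) (hR : (d - 1) * K + 2 ≤ R) :
    #{n ∈ Ico 1 R | P n ∈ B} = (d - 1) * #B + if 0 ∈ B then 1 else 0 := by
  rw [card_eq_sum_card_fiberwise (s := {n ∈ Ico 1 R | P n ∈ B}) (t := B)
    fun n hn => (mem_filter.1 hn).2]
  have hfiber : ∀ m ∈ B, #{n ∈ {n ∈ Ico 1 R | P n ∈ B} | P n = m}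
      = d - 1 + if m = 0 then 1 else 0 := by
    intro m hm
    rw [filter_filter, filter_congr fun n _ => and_iff_right_of_imp fun h : P n = m => h ▸ hm]
    have := mem_range.1 (hB hm)
    exact hP.card_filter_parent_eq (by nlinarith)
  rw [sum_congr rfl hfiber, sum_add_distrib, sum_const, smul_eq_mul, sum_ite_eq']
  ring

theorem le_card_boundary_add_card (hP : IsBFSParent d P) (hd : 2 ≤ d) {A B : Finset ℕ}
    {K R : ℕ} (hBA : B ⊆ A) (hA : A ⊆ range K) (hB : B.Nonempty) (hR : (d - 1) * K + 2 ≤ R) :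
    (d - 1) * #B + 2 ≤ #{n ∈ Ico 1 R | (n ∈ B ∧ P n ∉ A) ∨ (P n ∈ B ∧ n ∉ A)} + #A := by
  have hlt : ∀ n ∈ Ico 1 R, P n < n := fun n hn => hP.lt_self hd (mem_Ico.1 hn).1
  have hK : K ≤ (d - 1) * K := Nat.le_mul_of_pos_left K (by omega)
  have hself := filter_mem_Ico_one_eq_erase (R := R)
    (hBA.trans (hA.trans (range_subset_range.2 (by omega))))
  have hparent := hP.card_filter_parent_mem (hBA.trans hA) hR
  -- Counted with multiplicity, the edges at `B` are those inside `B` (twice), those from `B`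
  -- into `A \ B` and those leaving `A`.
  have hdegree : #{n ∈ Ico 1 R | n ∈ B} + #{n ∈ Ico 1 R | P n ∈ B}
      ≤ #{n ∈ Ico 1 R | n ∈ B ∧ P n ∈ B} + #{n ∈ Ico 1 R | n ∈ A ∧ P n ∈ A}
        + #{n ∈ Ico 1 R | (n ∈ B ∧ P n ∉ A) ∨ (P n ∈ B ∧ n ∉ A)} := by
    simp only [card_filter, ← sum_add_distrib]
    refine sum_le_sum fun n _ => ?_
    have := @hBA n
    have := @hBA (P n)
    split_ifs <;> simp_all
  have hinB := card_filter_mem_and_mem_le hlt B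
  have hinA := card_filter_mem_and_mem_le hlt A
  have hB1 := hB.card_pos
  have hBA' := card_le_card hBA
  have herase := card_erase_eq_ite (s := B) (a := 0)
  rw [hself] at hdegree
  split_ifs at hparent herase <;> omega

theorem card_crossing_le (hP : IsBFSParent d P) (hd : 2 ≤ d) {a b : ℕ → ℝ} (ha : Antitone a)
    {K R : ℕ} (hsa : ∀ n, K ≤ n → a n = 0) (hsb : ∀ n, K ≤ n → b n = 0)
    (hlevel : ∀ r, 0 ≤ r → #{k ∈ range K | r < a k} = #{k ∈ range K | r < b k})
    (hR : (d - 1) * K + 2 ≤ R) {t : ℝ} (ht : 0 ≤ t) (s : ℝ) :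
    #{n ∈ Ico 1 R | a n ≤ s ∧ s < a (P n) - t}
      ≤ #{n ∈ Ico 1 R | min (b (P n)) (b n) ≤ s ∧ s < max (b (P n)) (b n) - t} := by
  have ha0 (n : ℕ) : 0 ≤ a n := (hsa _ (le_max_right n K)).symm.le.trans (ha (le_max_left n K))
  rcases lt_or_ge s 0 with hs | hs
  · rw [filter_false_of_mem fun n _ h => (h.1.trans_lt hs).not_ge (ha0 n), card_empty]
    exact Nat.zero_le _
  set A : Finset ℕ := {k ∈ range K | s < b k}
  set B : Finset ℕ := {k ∈ range K | s + t < b k}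
  have hsorted (r : ℝ) (hr : 0 ≤ r) (n : ℕ) : r < a n ↔ n < #{k ∈ range K | r < b k} := by
    rw [← hlevel r hr]
    exact ha.lt_iff_lt_card_filter (fun n hn => (hsa n hn).le.trans hr) n
  -- Since `a` is sorted, a crossing edge of `a` joins `[0, #B)` to `[#A, ∞)`.
  have hcross : ∀ n ∈ {n ∈ Ico 1 R | a n ≤ s ∧ s < a (P n) - t}, #A ≤ n ∧ P n < #B := by
    intro n hn
    obtain ⟨-, han, hPn⟩ := mem_filter.1 hn
    exact ⟨not_lt.1 fun h => han.not_gt ((hsorted s hs n).2 h),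
      (hsorted (s + t) (by linarith) (P n)).1 (by linarith)⟩
  rcases B.eq_empty_or_nonempty with hB | hB
  · rw [filter_false_of_mem fun n hn h => by simpa [hB] using (hcross n (mem_filter.2 ⟨hn, h⟩)).2,
      card_empty]
    exact Nat.zero_le _
  have hsub : {n ∈ Ico 1 R | a n ≤ s ∧ s < a (P n) - t} ⊆ Icc #A ((d - 1) * #B + 1) :=
    fun n hn => mem_Icc.2 ⟨(hcross n hn).1,
      (hP _ n hB.card_pos (mem_Ico.1 (mem_filter.1 hn).1).1).1 (hcross n hn).2⟩
  have hnotA : ∀ k ∉ A, b k ≤ s := fun k hk => by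
    by_cases hkK : K ≤ k
    · exact (hsb k hkK).le.trans hs
    · exact not_lt.1 fun h => hk (mem_filter.2 ⟨mem_range.2 (not_le.1 hkK), h⟩)
  have hboundary : {n ∈ Ico 1 R | (n ∈ B ∧ P n ∉ A) ∨ (P n ∈ B ∧ n ∉ A)}
      ⊆ {n ∈ Ico 1 R | min (b (P n)) (b n) ≤ s ∧ s < max (b (P n)) (b n) - t} := by
    refine fun n hn => mem_filter.2 ⟨(mem_filter.1 hn).1, ?_⟩
    rcases (mem_filter.1 hn).2 with ⟨hnB, hPA⟩ | ⟨hPB, hnA⟩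
    · have := (mem_filter.1 hnB).2
      exact ⟨(min_le_left _ _).trans (hnotA _ hPA), by linarith [le_max_right (b (P n)) (b n)]⟩
    · have := (mem_filter.1 hPB).2
      exact ⟨(min_le_right _ _).trans (hnotA _ hnA), by linarith [le_max_left (b (P n)) (b n)]⟩
  have hBA : B ⊆ A := monotone_filter_right _ fun k _ h => by linarith
  have hiso := hP.le_card_boundary_add_card hd hBA (filter_subset _ _) hB hR
  calc #{n ∈ Ico 1 R | a n ≤ s ∧ s < a (P n) - t} ≤ (d - 1) * #B + 2 - #A := by
        simpa using card_le_card hsub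
    _ ≤ #{n ∈ Ico 1 R | (n ∈ B ∧ P n ∉ A) ∨ (P n ∈ B ∧ n ∉ A)} := by omega
    _ ≤ _ := card_le_card hboundary

theorem sum_max_abs_sub_sub_le (hP : IsBFSParent d P) (hd : 2 ≤ d) {a b : ℕ → ℝ}
    (ha : Antitone a) (τ : Equiv.Perm ℕ) (hab : ∀ n, a n = b (τ n)) {K R : ℕ}
    (hsa : ∀ n, K ≤ n → a n = 0) (hsb : ∀ n, K ≤ n → b n = 0) (hR : (d - 1) * K + 2 ≤ R)
    {t : ℝ} (ht : 0 ≤ t) :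
    ∑ n ∈ Ico 1 R, max (|a (P n) - a n| - t) 0 ≤ ∑ n ∈ Ico 1 R, max (|b (P n) - b n| - t) 0 := by
  have hlevel (r : ℝ) (hr : 0 ≤ r) : #{k ∈ range K | r < a k} = #{k ∈ range K | r < b k} := by
    simp only [hab]
    exact card_filter_lt_apply_perm τ (fun x hx => hsb x (by simpa using hx))
      (fun x hx => hab x ▸ hsa x (by simpa using hx)) hr
  calc ∑ n ∈ Ico 1 R, max (|a (P n) - a n| - t) 0
      = ∑ n ∈ Ico 1 R, max ((a (P n) - t) - a n) 0 := sum_congr rfl fun n hn => by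
        rw [abs_of_nonneg (sub_nonneg.2 (ha (hP.lt_self hd (mem_Ico.1 hn).1).le)), sub_right_comm]
    _ ≤ ∑ n ∈ Ico 1 R, max ((max (b (P n)) (b n) - t) - min (b (P n)) (b n)) 0 :=
        sum_max_sub_le_of_forall_card_le _ (hP.card_crossing_le hd ha hsa hsb hlevel hR ht)
    _ = ∑ n ∈ Ico 1 R, max (|b (P n) - b n| - t) 0 := sum_congr rfl fun n _ => by
        rw [sub_right_comm, max_sub_min_eq_abs']

theorem polya_szego (hP : IsBFSParent d P) (hd : 2 ≤ d) {a b : ℕ → ℝ} (ha : Antitone a)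
    (τ : Equiv.Perm ℕ) (hab : ∀ n, a n = b (τ n)) (hb : (Function.support b).Finite) :
    (∀ p : ℝ, 1 ≤ p →
      ∑' n, |a (P (n + 1)) - a (n + 1)| ^ p ≤ ∑' n, |b (P (n + 1)) - b (n + 1)| ^ p) ∧
      ⨆ n, |a (P (n + 1)) - a (n + 1)| ≤ ⨆ n, |b (P (n + 1)) - b (n + 1)| := by
  have ha' : (Function.support a).Finite := by
    have : Function.support a = τ ⁻¹' Function.support b := by ext; simp [hab]
    exact this ▸ hb.preimage τ.injective.injOn
  obtain ⟨K, hK⟩ := (ha'.union hb).bddAbove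
  have hsa (n : ℕ) (hn : K + 1 ≤ n) : a n = 0 :=
    by_contra fun h => absurd (hK (Or.inl h)) (by omega)
  have hsb (n : ℕ) (hn : K + 1 ≤ n) : b n = 0 :=
    by_contra fun h => absurd (hK (Or.inr h)) (by omega)
  have hvanish (c : ℕ → ℝ) (hc : ∀ n, K + 1 ≤ n → c n = 0) :
      ∀ n ∉ range ((d - 1) * (K + 1) + 1), |c (P (n + 1)) - c (n + 1)| = 0 := by
    intro n hn
    rw [mem_range, not_lt] at hn
    have hPn : K + 1 ≤ P (n + 1) := not_lt.1 fun h => by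
      have := (hP _ (n + 1) (by omega) (by omega)).1 h
      omega
    have := Nat.le_mul_of_pos_left (K + 1) (by omega : 0 < d - 1)
    rw [hc _ hPn, hc (n + 1) (by omega), sub_zero, abs_zero]
  have hmaj (t : ℝ) (ht : 0 ≤ t) :
      ∑ n ∈ range ((d - 1) * (K + 1) + 1), max (|a (P (n + 1)) - a (n + 1)| - t) 0
        ≤ ∑ n ∈ range ((d - 1) * (K + 1) + 1), max (|b (P (n + 1)) - b (n + 1)| - t) 0 := by
    simp only [range_eq_Ico, sum_Ico_add' (fun n => max (|a (P n) - a n| - t) 0),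
      sum_Ico_add' (fun n => max (|b (P n) - b n| - t) 0)]
    exact hP.sum_max_abs_sub_sub_le hd ha τ hab hsa hsb le_rfl ht
  exact ⟨fun p hp => tsum_rpow_le_tsum_rpow_of_forall_sum_max_sub_le (fun _ => abs_nonneg _)
      (fun _ => abs_nonneg _) (hvanish a hsa) (hvanish b hsb) hmaj hp,
    iSup_le_iSup_of_forall_sum_max_sub_le (fun _ => abs_nonneg _) (hvanish a hsa)
      (hvanish b hsb) hmaj⟩

end IsBFSParent

namespace SimpleGraph

variable {V : Type*} {G : SimpleGraph V}

theorem exists_adj_of_preconnected_induce_insert {s : Set V} {x : V} (hx : x ∉ s)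
    (hs : s.Nonempty) (h : (G.induce (insert x s)).Preconnected) : ∃ u ∈ s, G.Adj x u := by
  obtain ⟨u, hu⟩ := hs
  obtain ⟨W⟩ := h ⟨x, Set.mem_insert x s⟩ ⟨u, Set.mem_insert_of_mem x hu⟩
  have hadj := W.adj_snd (W.not_nil_of_ne fun h => hx (Subtype.mk.inj h ▸ hu))
  exact ⟨W.snd, (W.snd.2).resolve_left fun h => hadj.ne (Subtype.ext h.symm), hadj⟩

theorem IsAcyclic.eq_of_adj_of_preconnected_induce (hG : G.IsAcyclic) {s : Set V}
    (hs : (G.induce s).Preconnected) {x u w : V} (hx : x ∉ s) (hu : u ∈ s) (hw : w ∈ s)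
    (hxu : G.Adj x u) (hxw : G.Adj x w) : u = w := by
  classical
  obtain ⟨W⟩ := hs ⟨u, hu⟩ ⟨w, hw⟩
  let q : G.Walk u w := (W.map (Embedding.induce s).toHom).bypass
  have hxq : x ∉ q.support := fun h => by
    have := Walk.support_bypass_subset_support (W.map (Embedding.induce s).toHom) h
    rw [Walk.support_map] at this
    obtain ⟨y, -, hy⟩ := List.mem_map.1 this
    exact hx (hy ▸ y.2)
  have := hG.mem_support_of_ne_mem_support_of_adj_of_isPath (Walk.IsPath.of_adj hxu.symm)
    (Walk.bypass_isPath _) hxw hxq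
  simp only [Walk.support_cons, Walk.support_nil, List.mem_cons, List.not_mem_nil, or_false] at this
  exact (this.resolve_right fun h => hx (h ▸ hw)).symm

theorem IsAcyclic.exists_parent (hG : G.IsAcyclic) {v : ℕ → V} (hv : Function.Injective v)
    (hinit : ∀ N : ℕ, 1 ≤ N → (G.induce (v '' Set.Iio N)).Connected) :
    ∃ P : ℕ → ℕ, (∀ n, 1 ≤ n → P n < n) ∧
      ∀ i j, G.Adj (v i) (v j) ↔ (1 ≤ j ∧ i = P j) ∨ (1 ≤ i ∧ j = P i) := by
  have hnotMem (n : ℕ) : v n ∉ v '' Set.Iio n := by simp [hv.mem_set_image]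
  have hex (n : ℕ) (hn : 1 ≤ n) : ∃ i < n, G.Adj (v n) (v i) := by
    have hinsert : v '' Set.Iio (n + 1) = insert (v n) (v '' Set.Iio n) := by
      rw [← Set.image_insert_eq, ← Order.Iio_succ_eq_insert, Order.succ_eq_add_one]
    obtain ⟨_, ⟨i, hi, rfl⟩, hadj⟩ := exists_adj_of_preconnected_induce_insert (hnotMem n)
      ⟨v 0, 0, hn, rfl⟩ (hinsert ▸ (hinit (n + 1) (by omega)).preconnected)
    exact ⟨i, hi, hadj⟩
  choose! P hPlt hPadj using hex
  have huniq (n i : ℕ) (hn : 1 ≤ n) (hi : i < n) (h : G.Adj (v n) (v i)) : i = P n :=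
    hv (hG.eq_of_adj_of_preconnected_induce (hinit n hn).preconnected (hnotMem n) ⟨i, hi, rfl⟩
      ⟨P n, hPlt n hn, rfl⟩ h (hPadj n hn))
  refine ⟨P, hPlt, fun i j => ⟨fun h => ?_, ?_⟩⟩
  · rcases lt_trichotomy i j with hij | rfl | hij
    · exact .inl ⟨by omega, huniq j i (by omega) hij h.symm⟩
    · exact absurd h (G.irrefl)
    · exact .inr ⟨by omega, huniq i j (by omega) hij h⟩
  · rintro (⟨hj, rfl⟩ | ⟨hi, rfl⟩)
    · exact (hPadj j hj).symm
    · exact hPadj i hi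

theorem isBFSParent_of_ncard_neighborSet {d : ℕ}
    {v : ℕ → V} (hv : Function.Bijective v) {P : ℕ → ℕ} (hP : ∀ n, 1 ≤ n → P n < n)
    (hadj : ∀ i j, G.Adj (v i) (v j) ↔ (1 ≤ j ∧ i = P j) ∨ (1 ≤ i ∧ j = P i))
    (hreg : ∀ u : V, (G.neighborSet u).ncard = d)
    (hnbr : ∀ N : ℕ, 1 ≤ N → ∀ u : V, (∃ i < N, G.Adj u (v i)) →
      u ∈ v '' Set.Iio ((d - 1) * N + 2)) :
    IsBFSParent d P := by
  classical
  have hup (M n : ℕ) (hM : 1 ≤ M) (hn : 1 ≤ n) (hPn : P n < M) : n ≤ (d - 1) * M + 1 := by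
    obtain ⟨k, hk, hkn⟩ := hnbr M hM (v n) ⟨P n, hPn, (hadj _ _).2 (.inr ⟨hn, rfl⟩)⟩
    rw [hv.1 hkn, Set.mem_Iio] at hk
    omega
  refine isBFSParent_of_card_children hup fun m => ?_
  set C := {n ∈ Icc 1 ((d - 1) * (m + 1) + 1) | P n = m}
  have hC (j : ℕ) : j ∈ C ↔ 1 ≤ j ∧ P j = m := by
    simp only [C, mem_filter, mem_Icc]
    exact ⟨fun h => ⟨h.1.1, h.2⟩, fun h => ⟨⟨h.1, hup (m + 1) j (by omega) h.1 (by omega)⟩, h.2⟩⟩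
  have hdeg := hreg (v m)
  split_ifs with hm
  · have : G.neighborSet (v m) = ↑(C.image v) := by
      ext u
      obtain ⟨j, rfl⟩ := hv.2 u
      simp [hadj, hC, hv.1.eq_iff, eq_comm, hm]
    have h1 : 1 ∈ C := (hC 1).2 ⟨le_rfl, by have := hP 1 le_rfl; omega⟩
    rw [this, Set.ncard_coe_finset, card_image_of_injective _ hv.1] at hdeg
    have := card_pos.2 ⟨1, h1⟩
    omega
  · have : G.neighborSet (v m) = ↑((insert (P m) C).image v) := by
      ext u
      obtain ⟨j, rfl⟩ := hv.2 u
      simp [hadj, hC, hv.1.eq_iff, eq_comm, Nat.one_le_iff_ne_zero.2 hm, or_comm]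
    have hPm : P m ∉ C := fun h => by
      have := (hC _).1 h
      have := hP _ this.1
      have := hP m (by omega)
      omega
    rw [this, Set.ncard_coe_finset, card_image_of_injective _ hv.1, card_insert_of_notMem hPm]
      at hdeg
    omega

theorem exists_equiv_edgeSet {v : ℕ → V} (hv : Function.Bijective v) {P : ℕ → ℕ}
    (hP : ∀ n, 1 ≤ n → P n < n)
    (hadj : ∀ i j, G.Adj (v i) (v j) ↔ (1 ≤ j ∧ i = P j) ∨ (1 ≤ i ∧ j = P i)) :
    ∃ E : ℕ ≃ G.edgeSet, ∀ n, (E n : Sym2 V) = s(v (P (n + 1)), v (n + 1)) := by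
  refine ⟨Equiv.ofBijective (fun n => ⟨s(v (P (n + 1)), v (n + 1)),
    (hadj _ _).2 (.inl ⟨by omega, rfl⟩)⟩) ⟨fun m n h => ?_, fun ⟨e, he⟩ => ?_⟩, fun n => rfl⟩
  · rcases Sym2.eq_iff.1 (congrArg Subtype.val h) with ⟨-, h⟩ | ⟨h₁, h₂⟩
    · simpa using hv.1 h
    · have := hP (m + 1) (by omega)
      have := hP (n + 1) (by omega)
      have := hv.1 h₁
      have := hv.1 h₂
      omega
  · induction e using Sym2.ind with
    | _ x y =>
      obtain ⟨i, rfl⟩ := hv.2 x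
      obtain ⟨j, rfl⟩ := hv.2 y
      rcases (hadj i j).1 he with ⟨hj, rfl⟩ | ⟨hi, rfl⟩
      · exact ⟨j - 1, Subtype.ext (by simp [Nat.sub_add_cancel hj])⟩
      · exact ⟨i - 1, Subtype.ext (by simp [Nat.sub_add_cancel hi, Sym2.eq_swap])⟩

end SimpleGraph

theorem gradLp_eq_tsum {V ι : Type*} {G : SimpleGraph V} (E : ι ≃ G.edgeSet) {x y : ι → V}
    (hE : ∀ i, (E i : Sym2 V) = s(x i, y i)) (g : V → ℝ) (p : ℝ) :
    gradLp G g p = (∑' i, |g (x i) - g (y i)| ^ p) ^ (1 / p) := by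
  rw [gradLp, ← E.tsum_eq]
  simp only [hE, Sym2.lift_mk]

theorem gradLinf_eq_iSup {V ι : Type*} {G : SimpleGraph V} (E : ι ≃ G.edgeSet) {x y : ι → V}
    (hE : ∀ i, (E i : Sym2 V) = s(x i, y i)) (g : V → ℝ) :
    gradLinf G g = ⨆ i, |g (x i) - g (y i)| := by
  rw [gradLinf, ← E.iSup_comp]
  simp only [hE, Sym2.lift_mk]

theorem IsRearrangement.exists_perm {V : Type*} {v : ℕ → V} (hv : Function.Bijective v)
    {f g : V → ℝ} (h : IsRearrangement v f g) : ∃ τ : Equiv.Perm ℕ, ∀ n, g (v n) = f (v (τ n)) := by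
  obtain ⟨⟨σ, rfl⟩, -⟩ := h
  exact ⟨(Equiv.ofBijective v hv).symm.permCongr σ, fun n => by
    simp [Equiv.permCongr_apply, Equiv.ofBijective_apply_symm_apply]⟩

theorem tree_polya_szego_general {V : Type*} (G : SimpleGraph V) (d : ℕ) (hd : 2 ≤ d)
    (hacyc : G.IsAcyclic)
    (hreg : ∀ u : V, (G.neighborSet u).ncard = d)
    (v : ℕ → V) (hv : Function.Bijective v)
    (hinit : ∀ N : ℕ, 1 ≤ N → (G.induce (v '' Set.Iio N)).Connected)
    (hnbr : ∀ N : ℕ, 1 ≤ N → ∀ u : V, (∃ i < N, G.Adj u (v i)) →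
      u ∈ v '' Set.Iio ((d - 1) * N + 2))
    (f fstar : V → ℝ) (hsupp : (Function.support f).Finite)
    (hre : IsRearrangement v f fstar) :
    (∀ p : ℝ, 1 ≤ p → gradLp G fstar p ≤ gradLp G f p) ∧
      gradLinf G fstar ≤ gradLinf G f := by
  obtain ⟨P, hPlt, hadj⟩ := hacyc.exists_parent hv.1 hinit
  have hP : IsBFSParent d P := G.isBFSParent_of_ncard_neighborSet hv hPlt hadj hreg hnbr
  obtain ⟨E, hE⟩ := G.exists_equiv_edgeSet hv hPlt hadj
  obtain ⟨τ, hτ⟩ := hre.exists_perm hv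
  have hb : (Function.support (f ∘ v)).Finite := by
    rw [Function.support_comp_eq_preimage]
    exact hsupp.preimage hv.1.injOn
  obtain ⟨hLp, hLinf⟩ := hP.polya_szego hd (a := fstar ∘ v) (b := f ∘ v) hre.2 τ hτ hb
  refine ⟨fun p hp => ?_, ?_⟩
  · rw [gradLp_eq_tsum E hE, gradLp_eq_tsum E hE]
    exact Real.rpow_le_rpow (tsum_nonneg fun _ => by positivity) (hLp p hp) (by positivity)
  · rw [gradLinf_eq_iSup E hE, gradLinf_eq_iSup E hE]
    exact hLinf

/-- On the infinite `d`-regular tree (`d ≥ 2`), any enumeration `v`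
such that each initial segment `{v₁,…,v_N}` induces a connected subgraph and every
vertex adjacent to `{v₁,…,v_N}` lies in `{v₁,…,v_{(d-1)N+2}}` (e.g. the canonical
breadth-first ordering) gives a rearrangement satisfying `‖∇f*‖_{L^p} ≤ ‖∇f‖_{L^p}`
for all `1 ≤ p < ∞` and for `p = ∞`. -/
theorem tree_polya_szego {V : Type*} (G : SimpleGraph V) (d : ℕ) (hd : 2 ≤ d)
    (hconn : G.Connected) (hacyc : G.IsAcyclic)
    (hreg : ∀ u : V, (G.neighborSet u).ncard = d)
    (v : ℕ → V) (hv : Function.Bijective v)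
    (hinit : ∀ N : ℕ, 1 ≤ N → (G.induce (v '' Set.Iio N)).Connected)
    (hnbr : ∀ N : ℕ, 1 ≤ N → ∀ u : V, (∃ i < N, G.Adj u (v i)) →
      u ∈ v '' Set.Iio ((d - 1) * N + 2))
    (f fstar : V → ℝ) (hsupp : (Function.support f).Finite) (hpos : ∀ x, 0 ≤ f x)
    (hre : IsRearrangement v f fstar) :
    (∀ p : ℝ, 1 ≤ p → gradLp G fstar p ≤ gradLp G f p) ∧
      gradLinf G fstar ≤ gradLinf G f :=
  tree_polya_szego_general G d hd hacyc hreg v hv hinit hnbr f fstar hsupp hre
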